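/- arXiv:1910.08517 — 3 statements merged into one kernel-verified Lean document; each statement's English description precedes it below -/
import Mathlib

section
/- Let D₁, …, D_{2k} (k ≥ 2) be disjoint nonempty vertex sets arranged in a cycle, and suppose a cluster partition P of their union satisfies: (1) each D_j is contained in one part of P; (2) for every even j, D_j and D_{j+1} are in the same part or D_{j+1} and D_{j+2} are in the same part (indices mod 2k); (3) for every j, D_j and D_{j+2} are in different parts. Then either for all even j the sets D_j and D_{j+1} share a part and for all odd j they do not, or for all odd j the sets D_j and D_{j+1} share a part and for all even j they do not. -/
private theorem alternation_aux (k : ℕ) (hk : 2 ≤ k) (S : ZMod (2 * k) → Prop)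
    (hA : ∀ j, S j → ¬ S (j + 1))
    (h2 : ∀ j : ZMod (2 * k), Even j → S j ∨ S (j + 1)) :
    ((∀ j : ZMod (2 * k), Even j → S j) ∧ (∀ j : ZMod (2 * k), ¬ Even j → ¬ S j)) ∨
    ((∀ j : ZMod (2 * k), ¬ Even j → S j) ∧ (∀ j : ZMod (2 * k), Even j → ¬ S j)) := by
  haveI : NeZero (2 * k) := ⟨by omega⟩
  have h0' : (2 : ZMod (2 * k)) * (k : ZMod (2 * k)) = 0 := by
    have := ZMod.natCast_self (2 * k)
    push_cast at this
    exact this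
  have epar2 : ∀ j : ZMod (2 * k), ¬ Even j → Even (j + 1) := by
    intro j hj
    rcases Nat.even_or_odd j.val with he | ho
    · exfalso
      obtain ⟨a, ha⟩ := he
      refine hj ⟨(a : ZMod (2 * k)), ?_⟩
      have hvr : ((j.val : ℕ) : ZMod (2 * k)) = j := ZMod.natCast_rightInverse j
      rw [← hvr, ha]; push_cast; ring
    · obtain ⟨a, ha⟩ := ho
      refine ⟨(a : ZMod (2 * k)) + 1, ?_⟩
      have hvr : ((j.val : ℕ) : ZMod (2 * k)) = j := ZMod.natCast_rightInverse j
      rw [← hvr, ha]; push_cast; ring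
  by_cases hS1 : S 1
  · right
    have key : ∀ m : ℕ, S (1 + 2 * m) := by
      intro m
      induction m with
      | zero => simpa using hS1
      | succ m ih =>
        have hna := hA _ ih
        have he : Even ((1 : ZMod (2 * k)) + 2 * m + 1) := ⟨1 + m, by push_cast; ring⟩
        rcases h2 _ he with h | h
        · exact absurd h hna
        · have heq : (1 : ZMod (2 * k)) + 2 * m + 1 + 1 = 1 + 2 * (m + 1 : ℕ) := by
            push_cast; ring
          rwa [heq] at h
    have hodd : ∀ j : ZMod (2 * k), ¬ Even j → S j := by
      intro j hj
      obtain ⟨r, hr⟩ := epar2 j hj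
      have hvr : ((r.val : ℕ) : ZMod (2 * k)) = r := ZMod.natCast_rightInverse r
      have key2 := key (r.val + (k - 1))
      have heq : (1 : ZMod (2 * k)) + 2 * ((r.val + (k - 1) : ℕ) : ZMod (2 * k)) = j := by
        have hk1 : ((k - 1 : ℕ) : ZMod (2 * k)) = (k : ZMod (2 * k)) - 1 := by
          rw [Nat.cast_sub (by omega)]; norm_num
        push_cast [hk1]
        linear_combination (-1 : ZMod (2 * k)) * hr + 2 * hvr + h0'
      rwa [heq] at key2
    refine ⟨hodd, ?_⟩
    intro j hj hSj
    have e1 : ¬ Even (1 : ZMod (2 * k)) := by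
      rintro ⟨r, hr⟩
      have hmap := congrArg (ZMod.castHom (show (2:ℕ) ∣ 2 * k from ⟨k, rfl⟩) (ZMod 2)) hr
      rw [map_one, map_add] at hmap
      revert hmap
      generalize (ZMod.castHom (show (2:ℕ) ∣ 2 * k from ⟨k, rfl⟩) (ZMod 2)) r = c
      revert c
      decide
    refine hA j hSj (hodd (j + 1) ?_)
    rintro ⟨b, hb⟩
    obtain ⟨a, ha⟩ := hj
    exact e1 ⟨b - a, by linear_combination hb - ha⟩
  · left
    have hS0 : S 0 := by
      rcases h2 0 ⟨0, by ring⟩ with h | h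
      · exact h
      · exact absurd (by simpa using h) hS1
    have key : ∀ m : ℕ, S (-(2 * m)) := by
      intro m
      induction m with
      | zero => simpa using hS0
      | succ m ih =>
        have he : Even (-(2 * ((m : ℕ) + 1)) : ZMod (2 * k)) := ⟨-((m : ZMod (2*k)) + 1), by push_cast; ring⟩
        have heq : (-(2 * ((m : ℕ) + 1)) : ZMod (2 * k)) = -(2 * ((m + 1 : ℕ) : ZMod (2 * k))) := by
          push_cast; ring
        rcases h2 _ (by rw [← heq] at *; exact he) with h | h
        · rwa [heq] at h
        · exfalso
          have := hA _ h
          have hmid : (-(2 * ((m + 1 : ℕ) : ZMod (2 * k)))) + 1 + 1 = -(2 * (m : ℕ)) := by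
            push_cast; ring
          rw [heq] at this
          rw [hmid] at this
          exact this ih
    have heven : ∀ j : ZMod (2 * k), Even j → S j := by
      rintro j ⟨r, hr⟩
      have hvr : ((r.val : ℕ) : ZMod (2 * k)) = r := ZMod.natCast_rightInverse r
      have hvlt : r.val ≤ 2 * k := le_of_lt (ZMod.val_lt r)
      have key2 := key (2 * k - r.val)
      have heq : (-(2 * ((2 * k - r.val : ℕ) : ZMod (2 * k))) : ZMod (2 * k)) = j := by
        rw [Nat.cast_sub hvlt]
        push_cast
        linear_combination (-1 : ZMod (2 * k)) * hr + 2 * hvr + (-2 : ZMod (2*k)) * h0'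
      rwa [heq] at key2
    refine ⟨heven, ?_⟩
    intro j hj hSj
    exact hA j hSj (heven (j + 1) (epar2 j hj))

/-- Cycle-of-clusters alternation. Let `D₀, …, D_{2k-1}` (`k ≥ 2`) be disjoint
nonempty vertex sets arranged in a cycle, and let `R` be an equivalence relation
(the cluster partition) such that (1) each `D_j` lies inside one class; (2) for
every even `j`, `D_j, D_{j+1}` share a class or `D_{j+1}, D_{j+2}` do; (3) no
`D_j, D_{j+2}` share a class. Then either all even consecutive pairs share a class
and no odd pair does, or all odd pairs share a class and no even pair does. -/
theorem variable_gadget_alternation {α : Type*} (k : ℕ) (hk : 2 ≤ k)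
    (D : ZMod (2 * k) → Set α)
    (hne : ∀ j, (D j).Nonempty)
    (hdisj : ∀ j j', j ≠ j' → Disjoint (D j) (D j'))
    (R : α → α → Prop) (hR : Equivalence R)
    (h1 : ∀ j, ∀ x ∈ D j, ∀ y ∈ D j, R x y)
    (h2 : ∀ j : ZMod (2 * k), Even j →
      ((∃ x ∈ D j, ∃ y ∈ D (j + 1), R x y) ∨ (∃ x ∈ D (j + 1), ∃ y ∈ D (j + 2), R x y)))
    (h3 : ∀ j : ZMod (2 * k), ¬ ∃ x ∈ D j, ∃ y ∈ D (j + 2), R x y) :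
    ((∀ j : ZMod (2 * k), Even j → ∃ x ∈ D j, ∃ y ∈ D (j + 1), R x y) ∧
      (∀ j : ZMod (2 * k), ¬ Even j → ¬ ∃ x ∈ D j, ∃ y ∈ D (j + 1), R x y)) ∨
    ((∀ j : ZMod (2 * k), ¬ Even j → ∃ x ∈ D j, ∃ y ∈ D (j + 1), R x y) ∧
      (∀ j : ZMod (2 * k), Even j → ¬ ∃ x ∈ D j, ∃ y ∈ D (j + 1), R x y)) := by
  have hA : ∀ j : ZMod (2 * k), (∃ x ∈ D j, ∃ y ∈ D (j + 1), R x y) →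
      ¬ ∃ x ∈ D (j + 1), ∃ y ∈ D (j + 1 + 1), R x y := by
    rintro j ⟨x, hx, y, hy, hxy⟩ ⟨x', hx', y', hy', hxy'⟩
    have h12 : j + 1 + 1 = j + 2 := by ring
    rw [h12] at hy'
    exact h3 j ⟨x, hx, y', hy', hR.trans hxy (hR.trans (h1 (j + 1) y hy x' hx') hxy')⟩
  have h2' : ∀ j : ZMod (2 * k), Even j →
      (∃ x ∈ D j, ∃ y ∈ D (j + 1), R x y) ∨ (∃ x ∈ D (j + 1), ∃ y ∈ D (j + 1 + 1), R x y) := by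
    intro j hj
    rcases h2 j hj with h | h
    · exact Or.inl h
    · refine Or.inr ?_
      have h12 : j + 1 + 1 = j + 2 := by ring
      rw [h12]
      exact h
  exact alternation_aux k hk (fun j => ∃ x ∈ D j, ∃ y ∈ D (j + 1), R x y) hA h2'
end

section
/- Let V be a finite set of size n ≥ 1 and W a finite set partitioned into W₁, W₂. Suppose F is a set of pairs between V and W such that every connected component of the graph (V ∪ W, F) is either a path on three vertices with middle vertex in V, or a cycle on eight vertices alternating between V and W. Then, provided |W₁| = |W₂| ≥ |V ∩ (∪F)|, one can choose the partition W = W₁ ∪ W₂ so that no vertex of V has two F-neighbors in the same part W_t (t ∈ {1, 2}). -/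
/-!
Every vertex of `V` in a component has exactly two `F`-neighbours, and inside a single component
these pairs can be split by hand: the two leaves of a `P₃`, and the pairs `{x₁, x₅}` / `{x₃, x₇}`
of a `C₈`. Gluing these choices over the components gives a set `S` containing exactly one of the
two neighbours of each vertex of `V`. Sending each `w ∈ W` covered by `F` to one of its
neighbours is then injective on `S` and on its complement, so both halves of the covered part of
`W` have at most `|V ∩ ⋃F| ≤ m` elements, and the rest of `W` pads them to size `m`.
-/

open SimpleGraph Finset

section

variable {α : Type*}

def SeparatesNeighbors (F : Set (Sym2 α)) (U S : Set α) : Prop :=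
  ∀ v ∈ U, ∀ w w' : α, s(v, w) ∈ F → s(v, w') ∈ F → w ≠ w' → (w ∈ S ↔ w' ∉ S)

variable {F : Set (Sym2 α)} {V W : Finset α}

lemma SeparatesNeighbors.eq_of_mem_iff {U S : Set α} (hS : SeparatesNeighbors F U S)
    {v w w' : α} (hv : v ∈ U) (hw : s(v, w) ∈ F) (hw' : s(v, w') ∈ F)
    (hww' : w ∈ S ↔ w' ∈ S) : w = w' := by
  by_contra hne
  have := hS v hv w w' hw hw' hne
  tauto

lemma reachable_fromEdgeSet_of_mem {v w : α} (h : s(v, w) ∈ F) :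
    (fromEdgeSet F).Reachable v w := by
  by_cases hvw : v = w
  · exact hvw ▸ Reachable.refl v
  · exact (fromEdgeSet_adj F |>.mpr ⟨h, hvw⟩).reachable

lemma exists_separatesNeighbors_of_forall_reachable {U : Set α}
    (hloc : ∀ u, (∃ e ∈ F, u ∈ e) →
      ∃ S, SeparatesNeighbors F (U ∩ {v | (fromEdgeSet F).Reachable u v}) S) :
    ∃ S, SeparatesNeighbors F U S := by
  set G := fromEdgeSet F
  have hcomp : ∀ C : G.ConnectedComponent,
      ∃ S, SeparatesNeighbors F (U ∩ {v | G.connectedComponentMk v = C}) S := by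
    intro C
    by_cases hC : ∃ u, G.connectedComponentMk u = C ∧ ∃ e ∈ F, u ∈ e
    · obtain ⟨u, rfl, hu⟩ := hC
      obtain ⟨S, hS⟩ := hloc u hu
      exact ⟨S, fun v ⟨hv, hvu⟩ => hS v ⟨hv, ConnectedComponent.exact hvu.symm⟩⟩
    · refine ⟨∅, fun v ⟨_, hvC⟩ w _ hw _ _ => ?_⟩
      exact (hC ⟨v, hvC, s(v, w), hw, Sym2.mem_mk_left v w⟩).elim
  choose T hT using hcomp
  refine ⟨{w | w ∈ T (G.connectedComponentMk w)}, fun v hv w w' hw hw' hne => ?_⟩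
  have hcw : G.connectedComponentMk w = G.connectedComponentMk v :=
    ConnectedComponent.sound (reachable_fromEdgeSet_of_mem hw).symm
  have hcw' : G.connectedComponentMk w' = G.connectedComponentMk v :=
    ConnectedComponent.sound (reachable_fromEdgeSet_of_mem hw').symm
  simpa only [Set.mem_ofPred_eq, hcw, hcw'] using hT _ v ⟨hv, rfl⟩ w w' hw hw' hne

lemma card_le_card_of_forall_exists_neighbor {T U : Finset α}
    (hT : ∀ w ∈ T, ∃ v ∈ U, s(v, w) ∈ F)
    (hinj : ∀ v ∈ U, ∀ w ∈ T, ∀ w' ∈ T, s(v, w) ∈ F → s(v, w') ∈ F → w = w') :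
    #T ≤ #U := by
  choose! f hfU hfF using hT
  refine card_le_card_of_injOn f hfU fun w hw w' hw' hff => ?_
  exact hinj (f w) (hfU w hw) w hw w' hw' (hfF w hw) (hff ▸ hfF w' hw')

lemma card_le_ncard_of_separatesNeighbors {S : Set α} (hS : SeparatesNeighbors F V S)
    {T : Finset α} (hT : ∀ w ∈ T, ∃ v ∈ V, s(v, w) ∈ F)
    (hTS : ∀ w ∈ T, ∀ w' ∈ T, (w ∈ S ↔ w' ∈ S)) :
    #T ≤ {v : α | v ∈ V ∧ ∃ e ∈ F, v ∈ e}.ncard := by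
  classical
  have hVact : {v : α | v ∈ V ∧ ∃ e ∈ F, v ∈ e} = ↑(V.filter fun v => ∃ e ∈ F, v ∈ e) := by
    ext
    simp
  rw [hVact, Set.ncard_coe_finset]
  refine card_le_card_of_forall_exists_neighbor (fun w hw => ?_) fun v hv w hw w' hw' h h' =>
    hS.eq_of_mem_iff (mem_filter.mp hv).1 h h' (hTS w hw w' hw')
  obtain ⟨v, hv, hvw⟩ := hT w hw
  exact ⟨v, mem_filter.mpr ⟨hv, _, hvw, Sym2.mem_mk_left v w⟩, hvw⟩

lemma exists_balanced_partition_of_subset [DecidableEq α] {A B : Finset α} {m : ℕ}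
    (hA : A ⊆ W) (hB : B ⊆ W) (hAB : Disjoint A B) (hW : #W = 2 * m)
    (hAm : #A ≤ m) (hBm : #B ≤ m) :
    ∃ W₁ W₂ : Finset α,
      W₁ ∪ W₂ = W ∧ Disjoint W₁ W₂ ∧ #W₁ = m ∧ #W₂ = m ∧ A ⊆ W₁ ∧ B ⊆ W₂ := by
  have hmB : m ≤ #(W \ B) := by
    have := le_card_sdiff B W
    omega
  obtain ⟨W₁, hAW₁, hW₁, hW₁m⟩ :=
    exists_subsuperset_card_eq (subset_sdiff.mpr ⟨hA, hAB⟩) hAm hmB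
  have hW₁W : W₁ ⊆ W := hW₁.trans sdiff_subset
  refine ⟨W₁, W \ W₁, union_sdiff_of_subset hW₁W, disjoint_sdiff, hW₁m, ?_, hAW₁, ?_⟩
  · rw [card_sdiff_of_subset hW₁W, hW, hW₁m]
    omega
  · intro x hx
    exact mem_sdiff.mpr ⟨hB hx, fun hx₁ => (mem_sdiff.mp (hW₁ hx₁)).2 hx⟩

lemma mem_of_mem_of_subset_edges (hVW : Disjoint V W)
    (hFE : F ⊆ {e : Sym2 α | ∃ a ∈ V, ∃ b ∈ W, e = s(a, b)}) {v w : α} (hv : v ∈ V)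
    (h : s(v, w) ∈ F) : w ∈ W := by
  obtain ⟨a, ha, b, hb, he⟩ := hFE h
  rcases Sym2.eq_iff.mp he with ⟨rfl, rfl⟩ | ⟨rfl, rfl⟩
  · exact hb
  · exact absurd hv (disjoint_right.mp hVW hb)

lemma separatesNeighbors_of_reachable_eq_triple (hVW : Disjoint V W)
    (hFE : F ⊆ {e : Sym2 α | ∃ a ∈ V, ∃ b ∈ W, e = s(a, b)}) {u a b c : α}
    (hb : b ∈ V) (ha : a ∈ W) (hc : c ∈ W)
    (hu : {v | (fromEdgeSet F).Reachable u v} = {a, b, c}) :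
    SeparatesNeighbors F (↑V ∩ {v | (fromEdgeSet F).Reachable u v}) {a} := by
  have hleaf : ∀ v ∈ V, (fromEdgeSet F).Reachable u v →
      ∀ w, s(v, w) ∈ F → w = a ∨ w = c := by
    intro v hv hvu w hw
    have hwW := mem_of_mem_of_subset_edges hVW hFE hv hw
    have hwu : w ∈ ({a, b, c} : Set α) := hu ▸ hvu.trans (reachable_fromEdgeSet_of_mem hw)
    rcases hwu with rfl | rfl | rfl
    · exact .inl rfl
    · exact absurd hb (disjoint_right.mp hVW hwW)
    · exact .inr rfl
  intro v ⟨hv, hvu⟩ w w' hw hw' hne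
  have := hleaf v hv hvu w hw
  have := hleaf v hv hvu w' hw'
  simp only [Set.mem_singleton_iff]
  grind

lemma separatesNeighbors_of_reachable_eq_octagon (hVW : Disjoint V W) {u : α}
    {x : Fin 8 → α} (hx : Function.Injective x)
    (hxVW : ∀ i : Fin 8, if i.val % 2 = 0 then x i ∈ V else x i ∈ W)
    (hxF : ∀ i j : Fin 8, s(x i, x j) ∈ F → j = i + 1 ∨ i = j + 1)
    (hu : {v | (fromEdgeSet F).Reachable u v} = Set.range x) :
    SeparatesNeighbors F (↑V ∩ {v | (fromEdgeSet F).Reachable u v}) (x '' {1, 5}) := by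
  intro v ⟨hv, hvu⟩ w w' hw hw' hne
  obtain ⟨i, rfl⟩ : v ∈ Set.range x := hu ▸ hvu
  obtain ⟨j, rfl⟩ : w ∈ Set.range x := hu ▸ hvu.trans (reachable_fromEdgeSet_of_mem hw)
  obtain ⟨j', rfl⟩ : w' ∈ Set.range x := hu ▸ hvu.trans (reachable_fromEdgeSet_of_mem hw')
  have hi : i.val % 2 = 0 := by
    by_contra hi
    exact disjoint_left.mp hVW hv (by simpa [hi] using hxVW i)
  rw [hx.mem_set_image, hx.mem_set_image]
  -- the two neighbours `x (i ± 1)` of `x i` are at distance 2 along the cycle, hence 2 apart mod 4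
  have key : ∀ i j j' : Fin 8, i.val % 2 = 0 → (j = i + 1 ∨ i = j + 1) →
      (j' = i + 1 ∨ i = j' + 1) → j ≠ j' → (j = 1 ∨ j = 5 ↔ ¬(j' = 1 ∨ j' = 5)) := by
    decide
  simpa using key i j j' hi (hxF i j hw) (hxF i j' hw') (fun h => hne (congrArg x h))

end

theorem balanced_bipartition_exists_general {α : Type*} [DecidableEq α]
    (V W : Finset α) (hVW : Disjoint V W)
    (F : Set (Sym2 α))
    (hFE : F ⊆ {e : Sym2 α | ∃ a ∈ V, ∃ b ∈ W, e = s(a, b)})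
    (hcomp : ∀ u : α, (∃ e ∈ F, u ∈ e) →
      (∃ a b c : α, b ∈ V ∧ a ∈ W ∧ c ∈ W ∧ a ≠ c ∧
        s(a, b) ∈ F ∧ s(b, c) ∈ F ∧
        {v | (SimpleGraph.fromEdgeSet F).Reachable u v} = {a, b, c}) ∨
      (∃ x : Fin 8 → α, Function.Injective x ∧
        (∀ i : Fin 8, if i.val % 2 = 0 then x i ∈ V else x i ∈ W) ∧
        (∀ i : Fin 8, s(x i, x (i + 1)) ∈ F) ∧
        (∀ i j : Fin 8, s(x i, x j) ∈ F → j = i + 1 ∨ i = j + 1) ∧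
        {v | (SimpleGraph.fromEdgeSet F).Reachable u v} = Set.range x))
    (m : ℕ) (hW : W.card = 2 * m)
    (hm : {v : α | v ∈ V ∧ ∃ e ∈ F, v ∈ e}.ncard ≤ m) :
    ∃ W₁ W₂ : Finset α, W₁ ∪ W₂ = W ∧ Disjoint W₁ W₂ ∧ W₁.card = m ∧ W₂.card = m ∧
      ∀ v ∈ V, ∀ w w' : α, s(v, w) ∈ F → s(v, w') ∈ F → w ≠ w' →
        ¬ (w ∈ W₁ ∧ w' ∈ W₁) ∧ ¬ (w ∈ W₂ ∧ w' ∈ W₂) := by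
  classical
  obtain ⟨S, hS⟩ : ∃ S, SeparatesNeighbors F ↑V S := by
    refine exists_separatesNeighbors_of_forall_reachable fun u hu => ?_
    rcases hcomp u hu with ⟨a, b, c, hb, ha, hc, -, -, -, hu⟩ | ⟨x, hx, hxVW, -, hxF, hu⟩
    · exact ⟨_, separatesNeighbors_of_reachable_eq_triple hVW hFE hb ha hc hu⟩
    · exact ⟨_, separatesNeighbors_of_reachable_eq_octagon hVW hx hxVW hxF hu⟩
  set Wact := W.filter fun w => ∃ v ∈ V, s(v, w) ∈ F
  have hcard : ∀ T ⊆ Wact, (∀ w ∈ T, ∀ w' ∈ T, (w ∈ S ↔ w' ∈ S)) → #T ≤ m :=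
    fun T hT hTS => (card_le_ncard_of_separatesNeighbors hS
      (fun w hw => (mem_filter.mp (hT hw)).2) hTS).trans hm
  have hWact : Wact ⊆ W := filter_subset _ _
  obtain ⟨W₁, W₂, hWW, hdisj, hW₁, hW₂, hSW₁, hSW₂⟩ :=
    exists_balanced_partition_of_subset (A := Wact.filter (· ∈ S)) (B := Wact.filter (· ∉ S))
      ((filter_subset _ _).trans hWact) ((filter_subset _ _).trans hWact)
      (disjoint_filter_filter_not _ _ _) hW
      (hcard _ (filter_subset _ _) (by simp_all)) (hcard _ (filter_subset _ _) (by simp_all))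
  refine ⟨W₁, W₂, hWW, hdisj, hW₁, hW₂, fun v hv w w' hw hw' hne => ?_⟩
  have hside : ∀ y, s(v, y) ∈ F → (y ∈ S → y ∈ W₁) ∧ (y ∉ S → y ∈ W₂) := by
    intro y hy
    have hy : y ∈ Wact := mem_filter.mpr ⟨mem_of_mem_of_subset_edges hVW hFE hv hy, v, hv, hy⟩
    exact ⟨fun h => hSW₁ (mem_filter.mpr ⟨hy, h⟩), fun h => hSW₂ (mem_filter.mpr ⟨hy, h⟩)⟩
  have := hS v hv w w' hw hw' hne
  have := hside w hw
  have := hside w' hw'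
  have := disjoint_left.mp hdisj
  grind

/-- Balanced bipartition separating `F`-neighbors. Let `V` be nonempty, `W` a finite
set with `|W| = 2m`, and `F` a set of pairs between `V` and `W` whose connected
components are `P₃`s with center in `V` or `C₈`s alternating between `V` and `W`.
If `m ≥ |V ∩ ⋃F|`, then `W` can be partitioned into `W₁, W₂` of size `m` each such
that no vertex of `V` has two `F`-neighbors in the same part. -/
theorem balanced_bipartition_exists {α : Type*} [DecidableEq α]
    (V W : Finset α) (hVW : Disjoint V W) (hVne : V.Nonempty)
    (F : Set (Sym2 α))
    (hFE : F ⊆ {e : Sym2 α | ∃ a ∈ V, ∃ b ∈ W, e = s(a, b)})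
    (hcomp : ∀ u : α, (∃ e ∈ F, u ∈ e) →
      (∃ a b c : α, b ∈ V ∧ a ∈ W ∧ c ∈ W ∧ a ≠ c ∧
        s(a, b) ∈ F ∧ s(b, c) ∈ F ∧
        {v | (SimpleGraph.fromEdgeSet F).Reachable u v} = {a, b, c}) ∨
      (∃ x : Fin 8 → α, Function.Injective x ∧
        (∀ i : Fin 8, if i.val % 2 = 0 then x i ∈ V else x i ∈ W) ∧
        (∀ i : Fin 8, s(x i, x (i + 1)) ∈ F) ∧
        (∀ i j : Fin 8, s(x i, x j) ∈ F → j = i + 1 ∨ i = j + 1) ∧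
        {v | (SimpleGraph.fromEdgeSet F).Reachable u v} = Set.range x))
    (m : ℕ) (hW : W.card = 2 * m)
    (hm : {v : α | v ∈ V ∧ ∃ e ∈ F, v ∈ e}.ncard ≤ m) :
    ∃ W₁ W₂ : Finset α, W₁ ∪ W₂ = W ∧ Disjoint W₁ W₂ ∧ W₁.card = m ∧ W₂.card = m ∧
      ∀ v ∈ V, ∀ w w' : α, s(v, w) ∈ F → s(v, w') ∈ F → w ≠ w' →
        ¬ (w ∈ W₁ ∧ w' ∈ W₁) ∧ ¬ (w ∈ W₂ ∧ w' ∈ W₂) :=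
  balanced_bipartition_exists_general V W hVW F hFE hcomp m hW hm
end

section
/- Let P be a partition of a finite vertex set V of a graph G, and suppose every edge of G between two distinct parts of P and every non-edge of G inside a part of P is a vertex pair of some P3 in a modification-disjoint packing H, and moreover every P3 of H contains at most one such pair. Then S = {edges of G between different parts of P} ∪ {non-edges of G within parts of P} is a cluster editing set with |S| ≤ |H|. -/
def p3pairs {V : Type*} [DecidableEq V] (t : V × V × V) : Finset (Sym2 V) :=
  {s(t.1, t.2.1), s(t.2.1, t.2.2), s(t.1, t.2.2)}

def IsInducedP3 {V : Type*} (G : SimpleGraph V) (t : V × V × V) : Prop :=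
  G.Adj t.1 t.2.1 ∧ G.Adj t.2.1 t.2.2 ∧ t.1 ≠ t.2.2 ∧ ¬ G.Adj t.1 t.2.2

/-- Let `P` be a partition of the vertex set, given by a coloring `c`, and let
`S` consist of all edges of `G` between distinct parts together with all non-edges
of `G` inside parts. If every pair of `S` lies in some `P₃` of a modification-disjoint
packing `H`, and every `P₃` of `H` contains at most one pair of `S`, then `S` is a
cluster editing set with `|S| ≤ |H|`. -/
theorem partition_gives_editing_set {V β : Type*} [DecidableEq V] (G : SimpleGraph V)
    (H : Finset (V × V × V))
    (hH : ∀ t ∈ H, IsInducedP3 G t)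
    (hmd : ∀ t ∈ H, ∀ t' ∈ H, t ≠ t' → Disjoint (p3pairs t) (p3pairs t'))
    (c : V → β)
    (S : Set (Sym2 V))
    (hSdef : S = {e : Sym2 V | ∃ u v : V, e = s(u, v) ∧
        ((G.Adj u v ∧ c u ≠ c v) ∨ (u ≠ v ∧ ¬ G.Adj u v ∧ c u = c v))})
    (hcover : ∀ e ∈ S, ∃ t ∈ H, e ∈ p3pairs t)
    (honce : ∀ t ∈ H, ∀ e ∈ S, ∀ e' ∈ S,
      e ∈ p3pairs t → e' ∈ p3pairs t → e = e') :
    (∀ u v : V, (SimpleGraph.fromEdgeSet (symmDiff G.edgeSet S)).Reachable u v →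
        u = v ∨ (SimpleGraph.fromEdgeSet (symmDiff G.edgeSet S)).Adj u v) ∧
    S.ncard ≤ H.card := by
  have hmemS : ∀ u v : V, s(u, v) ∈ S ↔
      ((G.Adj u v ∧ c u ≠ c v) ∨ (u ≠ v ∧ ¬ G.Adj u v ∧ c u = c v)) := by
    intro u v
    subst hSdef
    constructor
    · rintro ⟨a, b, hab, h⟩
      rw [Sym2.eq_iff] at hab
      rcases hab with ⟨rfl, rfl⟩ | ⟨rfl, rfl⟩
      · exact h
      · rcases h with ⟨h1, h2⟩ | ⟨h1, h2, h3⟩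
        · exact Or.inl ⟨h1.symm, fun hc => h2 hc.symm⟩
        · exact Or.inr ⟨h1.symm, fun hc => h2 hc.symm, h3.symm⟩
    · intro h; exact ⟨u, v, rfl, h⟩
  have hadj : ∀ u v : V,
      (SimpleGraph.fromEdgeSet (symmDiff G.edgeSet S)).Adj u v ↔ (u ≠ v ∧ c u = c v) := by
    intro u v
    rw [SimpleGraph.fromEdgeSet_adj, Set.mem_symmDiff, SimpleGraph.mem_edgeSet, hmemS]
    constructor
    · rintro ⟨h, hne⟩
      refine ⟨hne, ?_⟩
      rcases h with ⟨hadj, hnS⟩ | ⟨hS, hnadj⟩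
      · by_contra hcc
        exact hnS (Or.inl ⟨hadj, hcc⟩)
      · rcases hS with ⟨ha, _⟩ | ⟨_, _, hc⟩
        · exact (hnadj ha).elim
        · exact hc
    · rintro ⟨hne, hc⟩
      refine ⟨?_, hne⟩
      by_cases hA : G.Adj u v
      · exact Or.inl ⟨hA, fun h => by
          rcases h with ⟨_, hc'⟩ | ⟨_, hna, _⟩
          · exact hc' hc
          · exact hna hA⟩
      · exact Or.inr ⟨Or.inr ⟨hne, hA, hc⟩, hA⟩
  constructor
  · intro u v h
    have hcuv : c u = c v := by
      obtain ⟨p⟩ := h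
      induction p with
      | nil => rfl
      | cons h p ih => exact ((hadj _ _).1 h).2.trans ih
    by_cases huv : u = v
    · exact Or.inl huv
    · exact Or.inr ((hadj u v).2 ⟨huv, hcuv⟩)
  · classical
    rcases Set.eq_empty_or_nonempty S with rfl | ⟨e0, he0⟩
    · simp
    obtain ⟨t0, _, _⟩ := hcover e0 he0
    set f : Sym2 V → V × V × V := fun e =>
      if h : e ∈ S then (hcover e h).choose else t0 with hf
    have hfH : ∀ e ∈ S, f e ∈ H ∧ e ∈ p3pairs (f e) := by
      intro e he
      simp only [hf, dif_pos he]
      exact ⟨(hcover e he).choose_spec.1, (hcover e he).choose_spec.2⟩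
    have hinj : Set.InjOn f S := by
      intro e he e' he' hee
      exact honce (f e) (hfH e he).1 e he e' he' (hfH e he).2 (hee ▸ (hfH e' he').2)
    have him : f '' S ⊆ ↑H := by
      rintro x ⟨e, he, rfl⟩
      exact (hfH e he).1
    calc S.ncard = (f '' S).ncard := (Set.ncard_image_of_injOn hinj).symm
      _ ≤ (↑H : Set (V × V × V)).ncard := Set.ncard_le_ncard him H.finite_toSet
      _ = H.card := Set.ncard_coe_finset H
end
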